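/- arXiv:1508.03971 — 2 statements merged into one kernel-verified Lean document; each statement's English description precedes it below -/
import Mathlib

section
/- Let G₁ and G₂ be finite nonempty simple graphs and let G = G₁ + G₂ be their join. If K(G) has at least 3 vertices (i.e., the product of the numbers of cliques of G₁ and of G₂ is at least 3), then the clique graph K(G) is Hamiltonian, i.e., it contains a cycle passing through every vertex exactly once. -/
open SimpleGraph

universe u v

/-- A clique (maximal complete subgraph) of `G`, viewed as a vertex set. -/
def IsMaxClique {V : Type u} (G : SimpleGraph V) (s : Set V) : Prop :=
  G.IsClique s ∧ ∀ t : Set V, G.IsClique t → s ⊆ t → s = t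

/-- The set of all cliques (maximal complete subgraphs) of `G`. -/
def maxCliques {V : Type u} (G : SimpleGraph V) : Set (Set V) :=
  {s | IsMaxClique G s}

/-- The clique graph `K(G)`: vertices are the cliques of `G`, two distinct cliques
being adjacent iff they intersect. -/
def cliqueGraph {V : Type u} (G : SimpleGraph V) : SimpleGraph ↥(maxCliques G) where
  Adj Q R := Q ≠ R ∧ ((Q : Set V) ∩ (R : Set V)).Nonempty
  symm := ⟨by
    intro Q R h
    refine ⟨h.1.symm, ?_⟩
    rw [Set.inter_comm]
    exact h.2⟩
  loopless := ⟨fun Q h => h.1 rfl⟩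

/-- A graph is complete iff any two distinct vertices are adjacent. -/
def IsCompleteGraph {V : Type u} (G : SimpleGraph V) : Prop :=
  ∀ x y : V, x ≠ y → G.Adj x y

/-- The join `G₁ + G₂` of two graphs on disjoint vertex sets: all edges of `G₁`
and of `G₂`, plus all edges between the two vertex sets. -/
def joinGraph {V₁ : Type u} {V₂ : Type v} (G₁ : SimpleGraph V₁) (G₂ : SimpleGraph V₂) :
    SimpleGraph (V₁ ⊕ V₂) where
  Adj x y :=
    match x, y with
    | Sum.inl a, Sum.inl b => G₁.Adj a b
    | Sum.inr a, Sum.inr b => G₂.Adj a b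
    | Sum.inl _, Sum.inr _ => True
    | Sum.inr _, Sum.inl _ => True
  symm := ⟨by rintro (a | a) (b | b) h <;> first | exact h.symm | trivial⟩
  loopless := ⟨by rintro (a | a) h <;> exact (SimpleGraph.irrefl _) h⟩

/-!
The cliques of `G₁ + G₂` are exactly the sets `C₁ ∪ C₂` with `Cᵢ` a clique of `Gᵢ`, and cliques
are nonempty, so two cliques of the join meet as soon as they agree in one component. Hence
`K(G₁ + G₂)` contains the rook's graph `K_m □ K_n` on its vertex set, where `m` and `n` count the
cliques of `G₁` and `G₂`. The rook's graph on at least three vertices is Hamiltonian: walk down the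
first column, then sweep the remaining columns row by row in boustrophedon order, bottom to top;
the sweep ends in the top row, which is adjacent to the starting vertex.
-/

theorem List.Nodup.getLast?_ne_head? {α : Type*} {l : List α} (hnd : l.Nodup)
    (hlen : 2 ≤ l.length) : l.getLast? ≠ l.head? := by
  match l, hnd, hlen with
  | a :: b :: t, hnd, _ =>
    rw [List.getLast?_cons_cons, List.getLast?_eq_some_getLast (List.cons_ne_nil b t),
      List.head?_cons, Ne, Option.some_inj]
    rintro rfl
    exact (List.nodup_cons.1 hnd).1 (List.getLast_mem _)

theorem List.IsChain.imp_of_nodup {α : Type*} {R S : α → α → Prop} {l : List α}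
    (h : l.IsChain R) (hnd : l.Nodup) (H : ∀ a b, a ≠ b → R a b → S a b) : l.IsChain S := by
  induction h with
  | nil => exact .nil
  | singleton a => exact .singleton a
  | cons_cons hr h ih =>
    have hnd' := List.nodup_cons.1 hnd
    exact .cons_cons (H _ _ (fun he => hnd'.1 (he ▸ List.mem_cons_self)) hr) (ih hnd'.2)

theorem SimpleGraph.exists_isHamiltonianCycle_of_isChain {V : Type*} [DecidableEq V]
    {G : SimpleGraph V} {l : List V} (hnd : l.Nodup)
    (hmem : ∀ v, v ∈ l) (hcard : 3 ≤ Nat.card V) (hchain : l.IsChain G.Adj)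
    (hclose : ∀ u ∈ l.getLast?, ∀ v ∈ l.head?, G.Adj u v) :
    ∃ (a : V) (p : G.Walk a a), p.IsHamiltonianCycle := by
  let e := hnd.getEquivOfForallMemList l hmem
  let _ : Fintype V := Fintype.ofEquiv _ e
  have hlen : l.length = Fintype.card V := (Fintype.card_fin _).symm.trans (Fintype.card_congr e)
  rw [Nat.card_eq_fintype_card, ← hlen] at hcard
  have hne : l ≠ [] := List.ne_nil_of_length_pos (by omega)
  refine ⟨_, .cons (hclose _ (List.getLast_mem_getLast? hne) _ (List.head_mem_head? hne))
    (.ofSupport l hne hchain), ?_⟩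
  rw [Walk.isHamiltonianCycle_iff_isCycle_and_length_eq, Walk.isCycle_iff_isPath_tail_and_le_length]
  simp only [Walk.tail_cons, Walk.length_cons, Walk.length_ofSupport]
  exact ⟨⟨Walk.IsPath.mk' (by simpa using hnd), by omega⟩, by omega⟩

section Boustrophedon

variable {α β : Type*}

def SharesCoord (p q : α × β) : Prop := p.1 = q.1 ∨ p.2 = q.2

def boustrophedon : List α → List β → List (α × β)
  | [], _ => []
  | a :: as, bs => bs.map (a, ·) ++ boustrophedon as bs.reverse

@[simp]
theorem boustrophedon_nil_right : ∀ as : List α, boustrophedon as ([] : List β) = []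
  | [] => rfl
  | a :: as => by simp [boustrophedon, boustrophedon_nil_right as]

theorem mem_boustrophedon {p : α × β} :
    ∀ {as : List α} {bs : List β}, p ∈ boustrophedon as bs ↔ p.1 ∈ as ∧ p.2 ∈ bs
  | [], _ => by simp [boustrophedon]
  | a :: as, bs => by
    obtain ⟨x, y⟩ := p
    simp only [boustrophedon, List.mem_append, List.mem_map, Prod.mk.injEq, mem_boustrophedon,
      List.mem_reverse, List.mem_cons]
    aesop

theorem head?_boustrophedon_cons (a : α) (as : List α) (bs : List β) :
    (boustrophedon (a :: as) bs).head? = bs.head?.map (a, ·) := by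
  cases bs <;> simp [boustrophedon]

theorem getLast?_boustrophedon {bs : List β} (hbs : bs ≠ []) :
    ∀ as : List α, (boustrophedon as bs).getLast?.map Prod.fst = as.getLast?
  | [] => rfl
  | [a] => by simp [boustrophedon, List.getLast?_map, List.getLast?_eq_some_getLast hbs]
  | a :: a' :: as => by
    have hrest : boustrophedon (a' :: as) bs.reverse ≠ [] := by
      simp [← List.head?_eq_none_iff, head?_boustrophedon_cons, hbs]
    rw [boustrophedon, List.getLast?_append_of_ne_nil _ hrest, List.getLast?_cons_cons,
      getLast?_boustrophedon (List.reverse_ne_nil_iff.2 hbs)]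

theorem nodup_boustrophedon :
    ∀ {as : List α} {bs : List β}, as.Nodup → bs.Nodup → (boustrophedon as bs).Nodup
  | [], _, _, _ => List.nodup_nil
  | a :: as, bs, has, hbs => by
    rw [List.nodup_cons] at has
    refine List.nodup_append.2 ⟨hbs.map (Prod.mk_right_injective a),
      nodup_boustrophedon has.2 (List.nodup_reverse.2 hbs), ?_⟩
    rintro _ hp q hq rfl
    obtain ⟨b, -, rfl⟩ := List.mem_map.1 hp
    exact has.1 (mem_boustrophedon.1 hq).1

theorem isChain_boustrophedon :
    ∀ (as : List α) (bs : List β), (boustrophedon as bs).IsChain SharesCoord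
  | [], _ => List.isChain_nil
  | a :: as, bs => by
    refine .append ?_ (isChain_boustrophedon as bs.reverse) ?_
    · exact (List.isChain_map _).2 (List.pairwise_of_forall fun _ _ => Or.inl rfl).isChain
    · rintro p hp q hq
      cases as with
      | nil => simp [boustrophedon] at hq
      | cons a' as =>
        rw [head?_boustrophedon_cons, List.head?_reverse] at hq
        rw [List.getLast?_map] at hp
        obtain ⟨b, hb, rfl⟩ := Option.mem_map.1 hp
        obtain ⟨b', hb', rfl⟩ := Option.mem_map.1 hq
        exact Or.inr (Option.mem_unique hb hb')

end Boustrophedon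

section RookCycle

variable {α β : Type*}

def rookCycle (as : List α) (b : β) (bs : List β) : List (α × β) :=
  as.map (·, b) ++ boustrophedon as.reverse bs

variable {as : List α} {b : β} {bs : List β}

theorem mem_rookCycle {p : α × β} : p ∈ rookCycle as b bs ↔ p.1 ∈ as ∧ p.2 ∈ b :: bs := by
  obtain ⟨x, y⟩ := p
  simp only [rookCycle, List.mem_append, List.mem_map, Prod.mk.injEq, mem_boustrophedon,
    List.mem_reverse, List.mem_cons]
  aesop

theorem nodup_rookCycle (has : as.Nodup) (hbs : (b :: bs).Nodup) : (rookCycle as b bs).Nodup := by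
  rw [List.nodup_cons] at hbs
  refine List.nodup_append.2 ⟨has.map fun _ _ h => (Prod.ext_iff.1 h).1,
    nodup_boustrophedon (List.nodup_reverse.2 has) hbs.2, ?_⟩
  rintro _ hp q hq rfl
  obtain ⟨a, -, rfl⟩ := List.mem_map.1 hp
  exact hbs.1 (mem_boustrophedon.1 hq).2

theorem isChain_rookCycle : (rookCycle as b bs).IsChain SharesCoord := by
  refine .append ((List.isChain_map _).2 (List.pairwise_of_forall fun _ _ => Or.inr rfl).isChain)
    (isChain_boustrophedon _ _) ?_
  rintro p hp q hq
  cases h : as.reverse with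
  | nil => simp [h, boustrophedon] at hq
  | cons a as' =>
    rw [h, head?_boustrophedon_cons] at hq
    rw [List.getLast?_map, ← List.head?_reverse, h, List.head?_cons] at hp
    obtain ⟨a'', ha, rfl⟩ := Option.mem_map.1 hp
    obtain ⟨b', -, rfl⟩ := Option.mem_map.1 hq
    exact Or.inl (Option.mem_some_iff.1 ha).symm

theorem rookCycle_closes :
    ∀ p ∈ (rookCycle as b bs).getLast?, ∀ q ∈ (rookCycle as b bs).head?, SharesCoord p q := by
  rintro p hp q hq
  cases as with
  | nil => simp [rookCycle, boustrophedon] at hq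
  | cons a as =>
    have hq : q = (a, b) := by simpa [rookCycle] using hq.symm
    subst hq
    rcases eq_or_ne bs [] with rfl | hbs
    · rw [rookCycle, boustrophedon_nil_right, List.append_nil, List.getLast?_map] at hp
      obtain ⟨_, -, rfl⟩ := Option.mem_map.1 hp
      exact Or.inr rfl
    · have hlast := getLast?_boustrophedon hbs (a :: as).reverse
      rw [List.getLast?_reverse, List.head?_cons] at hlast
      have hne : boustrophedon (a :: as).reverse bs ≠ [] := by
        rintro h
        rw [h] at hlast
        simp at hlast
      rw [rookCycle, List.getLast?_append_of_ne_nil _ hne] at hp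
      have hp₁ := Option.mem_map_of_mem Prod.fst hp
      rw [hlast] at hp₁
      exact Or.inl (Option.mem_some_iff.1 hp₁).symm

theorem top_boxProd_top_adj {p q : α × β} :
    (⊤ □ ⊤ : SimpleGraph (α × β)).Adj p q ↔ p ≠ q ∧ SharesCoord p q := by
  obtain ⟨a, b⟩ := p
  obtain ⟨c, d⟩ := q
  simp only [boxProd_adj, top_adj, SharesCoord, ne_eq, Prod.mk.injEq]
  tauto

theorem exists_isHamiltonianCycle_top_boxProd_top [Finite α] [Finite β] [DecidableEq (α × β)]
    (h : 3 ≤ Nat.card (α × β)) :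
    ∃ (a : α × β) (p : (⊤ □ ⊤ : SimpleGraph (α × β)).Walk a a), p.IsHamiltonianCycle := by
  obtain ⟨-, y⟩ := (Nat.card_pos_iff.1 (by omega : 0 < Nat.card (α × β))).1.some
  obtain ⟨as, has, has_mem⟩ := Finite.exists_univ_list α
  obtain ⟨_ | ⟨b, bs⟩, hbs, hbs_mem⟩ := Finite.exists_univ_list β
  · exact absurd (hbs_mem y) List.not_mem_nil
  have hnd := nodup_rookCycle has hbs
  have hmem (p : α × β) : p ∈ rookCycle as b bs := mem_rookCycle.2 ⟨has_mem _, hbs_mem _⟩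
  have hlen : (rookCycle as b bs).length = Nat.card (α × β) :=
    (Nat.card_eq_of_equiv_fin (hnd.getEquivOfForallMemList _ hmem).symm).symm
  refine exists_isHamiltonianCycle_of_isChain hnd hmem h
    (isChain_rookCycle.imp_of_nodup hnd fun _ _ hne hs => top_boxProd_top_adj.2 ⟨hne, hs⟩) ?_
  intro p hp q hq
  exact top_boxProd_top_adj.2 ⟨fun hpq => hnd.getLast?_ne_head? (by omega)
    (by rw [Option.mem_def.1 hp, Option.mem_def.1 hq, hpq]),
    rookCycle_closes p hp q hq⟩

end RookCycle

theorem IsMaxClique.nonempty {V : Type*} [Nonempty V] {G : SimpleGraph V} {s : Set V}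
    (h : IsMaxClique G s) : s.Nonempty := by
  rw [Set.nonempty_iff_ne_empty]
  rintro rfl
  obtain ⟨v⟩ := ‹Nonempty V›
  exact Set.singleton_ne_empty v (h.2 {v} (isClique_singleton v) (Set.empty_subset _)).symm

section JoinCliques

variable {V₁ V₂ : Type*} {G₁ : SimpleGraph V₁} {G₂ : SimpleGraph V₂}

theorem isClique_joinGraph_iff {S : Set (V₁ ⊕ V₂)} :
    (joinGraph G₁ G₂).IsClique S ↔
      G₁.IsClique (Sum.inl ⁻¹' S) ∧ G₂.IsClique (Sum.inr ⁻¹' S) := by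
  refine ⟨fun h => ⟨fun x hx y hy hxy => h hx hy (Sum.inl_injective.ne hxy),
    fun x hx y hy hxy => h hx hy (Sum.inr_injective.ne hxy)⟩, ?_⟩
  rintro ⟨h₁, h₂⟩ (x | x) hx (y | y) hy hxy
  · exact h₁ hx hy (fun h => hxy (congrArg _ h))
  · trivial
  · trivial
  · exact h₂ hx hy (fun h => hxy (congrArg _ h))

theorem isMaxClique_joinGraph_iff {S : Set (V₁ ⊕ V₂)} :
    IsMaxClique (joinGraph G₁ G₂) S ↔
      IsMaxClique G₁ (Sum.inl ⁻¹' S) ∧ IsMaxClique G₂ (Sum.inr ⁻¹' S) := by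
  simp only [IsMaxClique, isClique_joinGraph_iff]
  constructor
  · rintro ⟨⟨h₁, h₂⟩, hmax⟩
    have key (T : Set V₁ × Set V₂) (hT₁ : G₁.IsClique T.1) (hT₂ : G₂.IsClique T.2)
        (hST : Set.sumEquiv S ≤ T) : Set.sumEquiv S = T := by
      have hT : (joinGraph G₁ G₂).IsClique (Set.sumEquiv.symm T) := by
        rw [isClique_joinGraph_iff]
        simpa [Set.preimage_image_eq _ Sum.inl_injective,
          Set.preimage_image_eq _ Sum.inr_injective] using ⟨hT₁, hT₂⟩
      have := hmax _ (isClique_joinGraph_iff.1 hT) (Set.sumEquiv.le_symm_apply.2 hST)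
      rw [this, OrderIso.apply_symm_apply]
    exact ⟨⟨h₁, fun T₁ hT₁ hST => congrArg Prod.fst (key (T₁, _) hT₁ h₂ ⟨hST, le_rfl⟩)⟩,
      ⟨h₂, fun T₂ hT₂ hST => congrArg Prod.snd (key (_, T₂) h₁ hT₂ ⟨le_rfl, hST⟩)⟩⟩
  · rintro ⟨⟨h₁, hmax₁⟩, ⟨h₂, hmax₂⟩⟩
    refine ⟨⟨h₁, h₂⟩, fun T ⟨hT₁, hT₂⟩ hST => Set.sumEquiv.injective (Prod.ext ?_ ?_)⟩
    · exact hmax₁ _ hT₁ (Set.preimage_mono hST)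
    · exact hmax₂ _ hT₂ (Set.preimage_mono hST)

variable (G₁ G₂) in
def maxCliquesJoinEquiv : maxCliques (joinGraph G₁ G₂) ≃ maxCliques G₁ × maxCliques G₂ :=
  (Set.sumEquiv.toEquiv.subtypeEquiv fun _ => isMaxClique_joinGraph_iff).trans
    Equiv.subtypeProdEquivProd

theorem coe_maxCliquesJoinEquiv_symm (p : maxCliques G₁ × maxCliques G₂) :
    ((maxCliquesJoinEquiv G₁ G₂).symm p : Set (V₁ ⊕ V₂)) = Set.sumEquiv.symm (p.1, p.2) :=
  rfl

variable [Nonempty V₁] [Nonempty V₂]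

variable (G₁ G₂) in
def boxProdHomCliqueGraphJoin :
    (⊤ □ ⊤ : SimpleGraph (maxCliques G₁ × maxCliques G₂)) →g cliqueGraph (joinGraph G₁ G₂) where
  toFun := (maxCliquesJoinEquiv G₁ G₂).symm
  map_rel' {p q} h := by
    obtain ⟨hpq, hshare⟩ := top_boxProd_top_adj.1 h
    refine ⟨(maxCliquesJoinEquiv G₁ G₂).symm.injective.ne hpq, ?_⟩
    simp only [coe_maxCliquesJoinEquiv_symm, Set.sumEquiv_symm_apply]
    rcases hshare with h₁ | h₂
    · obtain ⟨x, hx⟩ := p.1.2.nonempty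
      exact ⟨Sum.inl x, Or.inl ⟨x, hx, rfl⟩, Or.inl ⟨x, h₁ ▸ hx, rfl⟩⟩
    · obtain ⟨y, hy⟩ := p.2.2.nonempty
      exact ⟨Sum.inr y, Or.inr ⟨y, hy, rfl⟩, Or.inr ⟨y, h₂ ▸ hy, rfl⟩⟩

end JoinCliques

open scoped Classical in
/-- If the clique graph of a join `G₁ + G₂` has at least `3` vertices, then it is
Hamiltonian: it contains a cycle passing through every vertex exactly once. -/
theorem cliqueGraph_join_hamiltonian {V₁ V₂ : Type u} [Finite V₁] [Finite V₂]
    [Nonempty V₁] [Nonempty V₂] (G₁ : SimpleGraph V₁) (G₂ : SimpleGraph V₂)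
    (h3 : 3 ≤ Nat.card ↥(maxCliques (joinGraph G₁ G₂))) :
    ∃ (a : ↥(maxCliques (joinGraph G₁ G₂)))
      (p : (cliqueGraph (joinGraph G₁ G₂)).Walk a a), p.IsHamiltonianCycle := by
  rw [Nat.card_congr (maxCliquesJoinEquiv G₁ G₂)] at h3
  obtain ⟨_, p, hp⟩ := exists_isHamiltonianCycle_top_boxProd_top h3
  let f := boxProdHomCliqueGraphJoin G₁ G₂
  exact ⟨_, p.map f, hp.map (f := f) (maxCliquesJoinEquiv G₁ G₂).symm.bijective⟩
end

section
/- Let G₁ and G₂ be finite clique-Helly simple graphs, each having at least two vertices and no isolated vertices. Then their Cartesian product G₁ □ G₂ is K-convergent. -/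
open SimpleGraph

universe u v

/-- A finite simple graph bundled with its vertex type. -/
structure BGraph : Type (u + 1) where
  V : Type u
  [finV : Finite V]
  graph : SimpleGraph V

attribute [instance] BGraph.finV

/-- Bundle a finite simple graph. -/
def BGraph.of {V : Type u} [Finite V] (G : SimpleGraph V) : BGraph.{u} :=
  { V := V, graph := G }

/-- The bundled clique graph operator `K`; iterated clique graphs are `KB^[n]`. -/
def KB : BGraph.{u} → BGraph.{u} :=
  fun H => { V := ↥(maxCliques H.graph), graph := cliqueGraph H.graph }

/-- A graph is `K`-convergent if its sequence of iterated clique graphs is finite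
up to isomorphism, i.e. two of its iterated clique graphs are isomorphic. -/
def KConvergent (H : BGraph.{u}) : Prop :=
  ∃ m n : ℕ, m < n ∧ Nonempty ((KB^[n] H).graph ≃g (KB^[m] H).graph)

/-- A graph is `K`-periodic if `Kⁿ(G) ≅ G` for some `n > 0`. -/
def KPeriodic (H : BGraph.{u}) : Prop :=
  ∃ n : ℕ, 0 < n ∧ Nonempty ((KB^[n] H).graph ≃g H.graph)

/-- A graph is clique-Helly if every nonempty family of pairwise intersecting cliques
has nonempty total intersection. -/
def CliqueHelly {V : Type u} (G : SimpleGraph V) : Prop :=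
  ∀ F : Set (Set V), F.Nonempty → (∀ s ∈ F, s ∈ maxCliques G) →
    (∀ s ∈ F, ∀ t ∈ F, (s ∩ t).Nonempty) → (⋂ s ∈ F, s).Nonempty

/-!
Every clique of `G₁ □ G₂` lies on a line: it is `Q ×ˢ {v}` or `{u} ×ˢ R` with `Q`, `R` cliques
of the factors. Projecting a pairwise intersecting family of cliques of the product thus gives,
in each factor, a pairwise intersecting family of cliques and singletons, so the product is
clique-Helly. Without isolated vertices, a horizontal and a vertical clique through `p` meet only
in `p`, so no other vertex lies in every clique containing `p`. In a clique-Helly graph with this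
property the stars `{cliques containing p}` are exactly the cliques of `K(G)`, and `p ↦ star p`
is an isomorphism `G ≃g K²(G)`.
-/

section CliqueGraph

variable {V : Type u} {G : SimpleGraph V}

theorem SimpleGraph.IsClique.exists_subset_mem_maxCliques [Finite V] {s : Set V}
    (hs : G.IsClique s) : ∃ t ∈ maxCliques G, s ⊆ t := by
  obtain ⟨t, hst, ht⟩ := Finite.exists_le_maximal (p := G.IsClique) hs
  exact ⟨t, ⟨ht.prop, fun t' ht' htt' => le_antisymm htt' (ht.2 ht' htt')⟩, hst⟩

theorem exists_maxClique_containing [Finite V] (v : V) : ∃ t ∈ maxCliques G, v ∈ t := by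
  obtain ⟨t, ht, hvt⟩ := (G.isClique_singleton v).exists_subset_mem_maxCliques
  exact ⟨t, ht, hvt rfl⟩

theorem nonempty_of_mem_maxCliques [Nonempty V] {s : Set V} (hs : s ∈ maxCliques G) :
    s.Nonempty := by
  obtain ⟨v⟩ := ‹Nonempty V›
  rw [Set.nonempty_iff_ne_empty]
  rintro rfl
  exact Set.singleton_ne_empty v (hs.2 {v} (G.isClique_singleton v) (Set.empty_subset _)).symm

theorem CliqueHelly.iInter_nonempty_of_maxCliques_or_singletons (hH : CliqueHelly G)
    {F : Set (Set V)} (hF : F.Nonempty) (hmem : ∀ s ∈ F, s ∈ maxCliques G ∨ ∃ u, s = {u})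
    (hint : ∀ s ∈ F, ∀ t ∈ F, (s ∩ t).Nonempty) : (⋂ s ∈ F, s).Nonempty := by
  by_cases h : ∃ u, {u} ∈ F
  · obtain ⟨u, hu⟩ := h
    exact ⟨u, Set.mem_iInter₂.2 fun s hs => Set.singleton_inter_nonempty.1 (hint _ hu s hs)⟩
  · push Not at h
    exact hH F hF (fun s hs => (hmem s hs).resolve_right fun ⟨u, hsu⟩ => h u (hsu ▸ hs)) hint

def cliqueStar (G : SimpleGraph V) (p : V) : Set (maxCliques G) :=
  {S | p ∈ (S : Set V)}

theorem isClique_cliqueStar (p : V) : (cliqueGraph G).IsClique (cliqueStar G p) :=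
  fun _ hS _ hS' hne => ⟨hne, p, hS, hS'⟩

theorem CliqueHelly.exists_subset_cliqueStar [Nonempty V] (hH : CliqueHelly G)
    {T : Set (maxCliques G)} (hT : (cliqueGraph G).IsClique T) (hne : T.Nonempty) :
    ∃ p, T ⊆ cliqueStar G p := by
  have hint : ∀ s ∈ Subtype.val '' T, ∀ t ∈ Subtype.val '' T, (s ∩ t).Nonempty := by
    rintro _ ⟨S, hS, rfl⟩ _ ⟨S', hS', rfl⟩
    obtain rfl | hSS' := eq_or_ne S S'
    · simpa using nonempty_of_mem_maxCliques S.2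
    · exact (hT hS hS' hSS').2
  obtain ⟨p, hp⟩ := hH _ (hne.image _) (by rintro _ ⟨S, -, rfl⟩; exact S.2) hint
  exact ⟨p, fun S hS => Set.mem_iInter₂.1 hp S ⟨S, hS, rfl⟩⟩

variable [Finite V]

theorem cliqueStar_mem_maxCliques (hH : CliqueHelly G)
    (hdom : ∀ p q, cliqueStar G p ⊆ cliqueStar G q → p = q) (p : V) :
    cliqueStar G p ∈ maxCliques (cliqueGraph G) := by
  have : Nonempty V := ⟨p⟩
  refine ⟨isClique_cliqueStar p, fun T hT hpT => subset_antisymm hpT ?_⟩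
  obtain ⟨S, hS, hpS⟩ := exists_maxClique_containing (G := G) p
  obtain ⟨q, hTq⟩ := hH.exists_subset_cliqueStar hT ⟨⟨S, hS⟩, hpT hpS⟩
  rwa [hdom p q (hpT.trans hTq)]

theorem exists_eq_cliqueStar [Nonempty V] (hH : CliqueHelly G) {T : Set (maxCliques G)}
    (hT : T ∈ maxCliques (cliqueGraph G)) : ∃ p, T = cliqueStar G p := by
  obtain ⟨v⟩ := ‹Nonempty V›
  obtain ⟨S, hS, -⟩ := exists_maxClique_containing (G := G) v
  have : Nonempty (maxCliques G) := ⟨⟨S, hS⟩⟩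
  obtain ⟨p, hTp⟩ := hH.exists_subset_cliqueStar hT.1 (nonempty_of_mem_maxCliques hT)
  exact ⟨p, hT.2 _ (isClique_cliqueStar p) hTp⟩

-- `hdom` says that no vertex is dominated: `N[p] ⊆ N[q]` only for `p = q`.
theorem CliqueHelly.nonempty_iso_cliqueGraph_cliqueGraph [Nonempty V] (hH : CliqueHelly G)
    (hdom : ∀ p q, cliqueStar G p ⊆ cliqueStar G q → p = q) :
    Nonempty (G ≃g cliqueGraph (cliqueGraph G)) := by
  let f : V → maxCliques (cliqueGraph G) := fun p =>
    ⟨cliqueStar G p, cliqueStar_mem_maxCliques hH hdom p⟩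
  have hf : f.Injective := fun p q h => hdom p q (congrArg Subtype.val h).le
  have hf' : f.Surjective := fun T =>
    (exists_eq_cliqueStar hH T.2).imp fun _ hp => Subtype.ext hp.symm
  refine ⟨⟨Equiv.ofBijective f ⟨hf, hf'⟩, fun {p q} => ⟨?_, fun hpq => ?_⟩⟩⟩
  · rintro ⟨hne, S, hpS, hqS⟩
    exact S.2.1 hpS hqS fun h => hne (h ▸ rfl)
  · obtain ⟨S, hS, hpqS⟩ := (isClique_pair.2 fun _ => hpq).exists_subset_mem_maxCliques
    exact ⟨hf.ne hpq.ne, ⟨S, hS⟩, hpqS (.inl rfl), hpqS (.inr rfl)⟩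

end CliqueGraph

section BoxProd

variable {V₁ : Type u} {V₂ : Type v} {G₁ : SimpleGraph V₁} {G₂ : SimpleGraph V₂}
  {S : Set (V₁ × V₂)} {a b c : V₁ × V₂}

namespace SimpleGraph.IsClique

theorem boxProd_prod_singleton {Q : Set V₁} (hQ : G₁.IsClique Q) (v : V₂) :
    (G₁ □ G₂).IsClique (Q ×ˢ {v}) := by
  rintro ⟨a, _⟩ ⟨ha, rfl⟩ ⟨b, _⟩ ⟨hb, rfl⟩ hab
  exact boxProd_adj_left.2 (hQ ha hb fun h => hab (h ▸ rfl))

theorem boxProd_singleton_prod {R : Set V₂} (hR : G₂.IsClique R) (u : V₁) :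
    (G₁ □ G₂).IsClique ({u} ×ˢ R) := by
  rintro ⟨_, a⟩ ⟨rfl, ha⟩ ⟨_, b⟩ ⟨rfl, hb⟩ hab
  exact boxProd_adj_right.2 (hR ha hb fun h => hab (h ▸ rfl))

theorem boxProd_image_fst (hS : (G₁ □ G₂).IsClique S) : G₁.IsClique (Prod.fst '' S) := by
  rintro _ ⟨a, ha, rfl⟩ _ ⟨b, hb, rfl⟩ hab
  exact ((boxProd_adj.1 (hS ha hb fun h => hab (congrArg Prod.fst h))).resolve_right
    fun h => hab h.2).1

theorem boxProd_image_snd (hS : (G₁ □ G₂).IsClique S) : G₂.IsClique (Prod.snd '' S) := by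
  rintro _ ⟨a, ha, rfl⟩ _ ⟨b, hb, rfl⟩ hab
  exact ((boxProd_adj.1 (hS ha hb fun h => hab (congrArg Prod.snd h))).resolve_left
    fun h => hab h.2).1

theorem boxProd_fst_eq_or_snd_eq (hS : (G₁ □ G₂).IsClique S) (ha : a ∈ S) (hb : b ∈ S) :
    a.1 = b.1 ∨ a.2 = b.2 := by
  obtain rfl | hab := eq_or_ne a b
  · exact .inl rfl
  · rcases boxProd_adj.1 (hS ha hb hab) with ⟨-, h⟩ | ⟨-, h⟩
    exacts [.inr h, .inl h]

theorem boxProd_snd_eq_of_fst_ne (hS : (G₁ □ G₂).IsClique S) (ha : a ∈ S) (hb : b ∈ S)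
    (hc : c ∈ S) (hab : a.1 ≠ b.1) : c.2 = a.2 := by
  have := hS.boxProd_fst_eq_or_snd_eq ha hb
  have := hS.boxProd_fst_eq_or_snd_eq hc ha
  have := hS.boxProd_fst_eq_or_snd_eq hc hb
  grind

theorem boxProd_fst_eq_of_snd_ne (hS : (G₁ □ G₂).IsClique S) (ha : a ∈ S) (hb : b ∈ S)
    (hc : c ∈ S) (hab : a.2 ≠ b.2) : c.1 = a.1 := by
  have := hS.boxProd_fst_eq_or_snd_eq ha hb
  have := hS.boxProd_fst_eq_or_snd_eq hc ha
  have := hS.boxProd_fst_eq_or_snd_eq hc hb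
  grind

theorem boxProd_image_fst_prod_image_snd_subset (hS : (G₁ □ G₂).IsClique S) :
    (Prod.fst '' S) ×ˢ (Prod.snd '' S) ⊆ S := by
  rintro ⟨_, _⟩ ⟨⟨c, hc, rfl⟩, ⟨d, hd, rfl⟩⟩
  rcases hS.boxProd_fst_eq_or_snd_eq hc hd with h | h
  · rw [h]; exact hd
  · rw [← h]; exact hc

end SimpleGraph.IsClique

theorem boxProd_image_fst_mem_maxCliques_or_eq_singleton (hS : S ∈ maxCliques (G₁ □ G₂))
    (ha : a ∈ S) :
    Prod.fst '' S ∈ maxCliques G₁ ∨ Prod.fst '' S = {a.1} := by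
  by_cases h : ∃ b ∈ S, a.1 ≠ b.1
  · obtain ⟨b, hb, hab⟩ := h
    refine .inl ⟨hS.1.boxProd_image_fst, fun Q hQ hSQ => ?_⟩
    have hS_eq : S = Q ×ˢ {a.2} := hS.2 _ (hQ.boxProd_prod_singleton a.2) fun c hc =>
      ⟨hSQ ⟨c, hc, rfl⟩, hS.1.boxProd_snd_eq_of_fst_ne ha hb hc hab⟩
    rw [hS_eq, Set.fst_image_prod _ (Set.singleton_nonempty _)]
  · push Not at h
    refine .inr (Set.eq_singleton_iff_unique_mem.2 ⟨⟨a, ha, rfl⟩, ?_⟩)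
    rintro _ ⟨b, hb, rfl⟩
    exact (h b hb).symm

theorem boxProd_image_snd_mem_maxCliques_or_eq_singleton (hS : S ∈ maxCliques (G₁ □ G₂))
    (ha : a ∈ S) :
    Prod.snd '' S ∈ maxCliques G₂ ∨ Prod.snd '' S = {a.2} := by
  by_cases h : ∃ b ∈ S, a.2 ≠ b.2
  · obtain ⟨b, hb, hab⟩ := h
    refine .inl ⟨hS.1.boxProd_image_snd, fun R hR hSR => ?_⟩
    have hS_eq : S = {a.1} ×ˢ R := hS.2 _ (hR.boxProd_singleton_prod a.1) fun c hc =>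
      ⟨hS.1.boxProd_fst_eq_of_snd_ne ha hb hc hab, hSR ⟨c, hc, rfl⟩⟩
    rw [hS_eq, Set.snd_image_prod (Set.singleton_nonempty _)]
  · push Not at h
    refine .inr (Set.eq_singleton_iff_unique_mem.2 ⟨⟨a, ha, rfl⟩, ?_⟩)
    rintro _ ⟨b, hb, rfl⟩
    exact (h b hb).symm

theorem CliqueHelly.boxProd (hH₁ : CliqueHelly G₁) (hH₂ : CliqueHelly G₂) :
    CliqueHelly (G₁ □ G₂) := by
  intro T hT hmax hint
  have hne : ∀ S ∈ T, S.Nonempty := fun S hS => by simpa using hint S hS S hS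
  have hfst : ∀ s ∈ (Prod.fst '' ·) '' T, s ∈ maxCliques G₁ ∨ ∃ u, s = {u} := by
    rintro _ ⟨S, hS, rfl⟩
    obtain ⟨a, ha⟩ := hne S hS
    exact (boxProd_image_fst_mem_maxCliques_or_eq_singleton (hmax S hS) ha).imp_right (⟨_, ·⟩)
  have hsnd : ∀ s ∈ (Prod.snd '' ·) '' T, s ∈ maxCliques G₂ ∨ ∃ v, s = {v} := by
    rintro _ ⟨S, hS, rfl⟩
    obtain ⟨a, ha⟩ := hne S hS
    exact (boxProd_image_snd_mem_maxCliques_or_eq_singleton (hmax S hS) ha).imp_right (⟨_, ·⟩)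
  obtain ⟨u, hu⟩ := hH₁.iInter_nonempty_of_maxCliques_or_singletons (hT.image _) hfst <| by
    rintro _ ⟨S, hS, rfl⟩ _ ⟨S', hS', rfl⟩
    exact ((hint S hS S' hS').image Prod.fst).mono (Set.image_inter_subset _ _ _)
  obtain ⟨v, hv⟩ := hH₂.iInter_nonempty_of_maxCliques_or_singletons (hT.image _) hsnd <| by
    rintro _ ⟨S, hS, rfl⟩ _ ⟨S', hS', rfl⟩
    exact ((hint S hS S' hS').image Prod.snd).mono (Set.image_inter_subset _ _ _)
  refine ⟨(u, v), Set.mem_iInter₂.2 fun S hS => ?_⟩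
  exact (hmax S hS).1.boxProd_image_fst_prod_image_snd_subset
    ⟨Set.mem_iInter₂.1 hu _ ⟨S, hS, rfl⟩, Set.mem_iInter₂.1 hv _ ⟨S, hS, rfl⟩⟩

theorem eq_of_cliqueStar_boxProd_subset [Finite V₁] [Finite V₂]
    (h₁ : ∀ v, ∃ u, G₁.Adj v u) (h₂ : ∀ v, ∃ u, G₂.Adj v u) {p q : V₁ × V₂}
    (hpq : cliqueStar (G₁ □ G₂) p ⊆ cliqueStar (G₁ □ G₂) q) : p = q := by
  obtain ⟨u, hu⟩ := h₁ p.1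
  obtain ⟨v, hv⟩ := h₂ p.2
  have hpu : (G₁ □ G₂).IsClique {p, (u, p.2)} :=
    isClique_pair.2 fun _ => boxProd_adj_left.2 hu
  have hpv : (G₁ □ G₂).IsClique {p, (p.1, v)} :=
    isClique_pair.2 fun _ => boxProd_adj_right.2 hv
  obtain ⟨S, hS, hpS⟩ := hpu.exists_subset_mem_maxCliques
  obtain ⟨S', hS', hpS'⟩ := hpv.exists_subset_mem_maxCliques
  have hqS : q ∈ S := hpq (a := ⟨S, hS⟩) (hpS (.inl rfl))
  have hqS' : q ∈ S' := hpq (a := ⟨S', hS'⟩) (hpS' (.inl rfl))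
  exact (Prod.ext (hS'.1.boxProd_fst_eq_of_snd_ne (hpS' (.inl rfl)) (hpS' (.inr rfl)) hqS' hv.ne)
    (hS.1.boxProd_snd_eq_of_fst_ne (hpS (.inl rfl)) (hpS (.inr rfl)) hqS hu.ne)).symm

end BoxProd

/-- The Cartesian product of two finite clique-Helly graphs, each with at least two
vertices and no isolated vertices, is `K`-convergent. -/
theorem kConvergent_boxProd {V₁ V₂ : Type u} [Finite V₁] [Finite V₂]
    [Nontrivial V₁] [Nontrivial V₂] (G₁ : SimpleGraph V₁) (G₂ : SimpleGraph V₂)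
    (hH₁ : CliqueHelly G₁) (hH₂ : CliqueHelly G₂)
    (hiso₁ : ∀ v : V₁, ∃ u : V₁, G₁.Adj v u) (hiso₂ : ∀ v : V₂, ∃ u : V₂, G₂.Adj v u) :
    KConvergent (BGraph.of (G₁ □ G₂)) := by
  obtain ⟨e⟩ := (hH₁.boxProd hH₂).nonempty_iso_cliqueGraph_cliqueGraph
    fun _ _ => eq_of_cliqueStar_boxProd_subset hiso₁ hiso₂
  exact ⟨0, 2, two_pos, ⟨e.symm⟩⟩
end
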